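/- Assume the Trudinger–Moser property holds with some constant ω ∈ (0,π] and that f satisfies hypotheses (H). Then there exist ρ > 0 and a > 0 such that φ(u) ≥ a for every u ∈ X with ‖u‖_X = ρ. -/

import Mathlib

open MeasureTheory Real Set Filter Topology

noncomputable section

/-- Integrand of the squared Gagliardo `H^{1/2}` seminorm on `ℝ`. -/
def gagKer (u : ℝ → ℝ) : ℝ × ℝ → ℝ :=
  fun p => (u p.1 - u p.2) ^ 2 / |p.1 - p.2| ^ 2

/-- Integrand of the Gagliardo inner product `⟨u,v⟩_X`. -/
def innerKer (u v : ℝ → ℝ) : ℝ × ℝ → ℝ :=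
  fun p => (u p.1 - u p.2) * (v p.1 - v p.2) / |p.1 - p.2| ^ 2

/-- `u ∈ H^{1/2}(ℝ)` : `u ∈ L²(ℝ)` with finite Gagliardo seminorm. -/
def memH (u : ℝ → ℝ) : Prop :=
  Measurable u ∧ Integrable (fun x => (u x) ^ 2) ∧ Integrable (gagKer u)

/-- Squared Gagliardo seminorm `[u]²`. -/
def gagSq (u : ℝ → ℝ) : ℝ := ∫ p : ℝ × ℝ, gagKer u p

/-- Gagliardo seminorm `[u]`, i.e. the norm `‖u‖_X`. -/
def gagNorm (u : ℝ → ℝ) : ℝ := Real.sqrt (gagSq u)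

/-- Inner product `⟨u, v⟩_X`. -/
def innerX (u v : ℝ → ℝ) : ℝ := ∫ p : ℝ × ℝ, innerKer u v p

/-- `u ∈ X` : `u ∈ H^{1/2}(ℝ)` and `u = 0` a.e. outside `(0,1)`. -/
def memX (u : ℝ → ℝ) : Prop :=
  memH u ∧ ∀ᵐ x : ℝ, x ∉ Ioo (0 : ℝ) 1 → u x = 0

/-- `λ₁ = inf {[u]² : u ∈ X, ‖u‖_{L²(0,1)} = 1}`. -/
def lam1 : ℝ :=
  sInf { t : ℝ | ∃ u : ℝ → ℝ, memX u ∧ (∫ x in Ioo (0 : ℝ) 1, (u x) ^ 2) = 1 ∧ gagSq u = t }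

/-- Trudinger–Moser property with constant `ω`. -/
def TMprop (ω : ℝ) : Prop :=
  ∀ α : ℝ, 0 < α → α < 2 * π * ω →
    ∃ K : ℝ, 0 < K ∧ ∀ u : ℝ → ℝ, memX u → gagNorm u ≤ 1 →
      (∫⁻ x in Ioo (0 : ℝ) 1, ENNReal.ofReal (exp (α * (u x) ^ 2))) ≤ ENNReal.ofReal K

/-- The primitive `F(t) = ∫₀ᵗ f(τ) dτ`. -/
def primF (f : ℝ → ℝ) : ℝ → ℝ := fun t => ∫ τ in (0 : ℝ)..t, f τ

/-- Hypotheses (H). -/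
def HypH (f : ℝ → ℝ) : Prop :=
  Continuous f ∧ f 0 = 0 ∧
  (∃ t₀ > (0 : ℝ), ∃ M > (0 : ℝ),
    ∀ t : ℝ, t₀ ≤ |t| → 0 < primF f t ∧ primF f t ≤ M * |f t|) ∧
  (∀ t : ℝ, t ≠ 0 → 0 < 2 * primF f t ∧ 2 * primF f t ≤ f t * t) ∧
  (Filter.limsup (fun t => primF f t / t ^ 2) (𝓝[≠] (0 : ℝ)) < lam1 / (4 * π)) ∧
  (∀ α : ℝ, 0 < α →
    Filter.Tendsto (fun t => |f t| * exp (-α * t ^ 2)) (Filter.cocompact ℝ) (𝓝 0))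

/-- Hypotheses (H') with Trudinger–Moser constant `ω`. -/
def HypH' (f : ℝ → ℝ) (ω : ℝ) : Prop :=
  Continuous f ∧ f 0 = 0 ∧
  (∃ t₀ > (0 : ℝ), ∃ M > (0 : ℝ),
    ∀ t : ℝ, t₀ ≤ |t| → 0 < primF f t ∧ primF f t ≤ M * |f t|) ∧
  (∀ t : ℝ, t ≠ 0 → 0 < 2 * primF f t ∧ 2 * primF f t ≤ f t * t) ∧
  (Filter.limsup (fun t => primF f t / t ^ 2) (𝓝[≠] (0 : ℝ)) < lam1 / (4 * π)) ∧
  ∃ α₀ : ℝ, 0 < α₀ ∧ α₀ < 2 * π * ω ∧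
    (∀ α : ℝ, 0 < α → α < α₀ →
      Filter.Tendsto (fun t => |f t| * exp (-α * t ^ 2)) (Filter.cocompact ℝ) Filter.atTop) ∧
    (∀ α : ℝ, α₀ < α →
      Filter.Tendsto (fun t => |f t| * exp (-α * t ^ 2)) (Filter.cocompact ℝ) (𝓝 0)) ∧
    ∃ ψ : ℝ → ℝ, memX ψ ∧ gagNorm ψ = 1 ∧
      ∃ b : ℝ, b < ω / (2 * α₀) ∧ ∀ t : ℝ, 0 < t →
        t ^ 2 / (4 * π) - (∫ x in Ioo (0 : ℝ) 1, primF f (t * ψ x)) ≤ b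

/-- `u` is a (weak) solution of `(-Δ)^{1/2} u = f(u)` in `(0,1)`, `u = 0` outside. -/
def IsWeakSolution (f u : ℝ → ℝ) : Prop :=
  memX u ∧ ∀ v : ℝ → ℝ, memX v →
    IntegrableOn (fun x => f (u x) * v x) (Ioo (0 : ℝ) 1) ∧
    innerX u v / (2 * π) = ∫ x in Ioo (0 : ℝ) 1, f (u x) * v x

/-- The energy functional `φ(u) = ‖u‖_X²/(4π) - ∫₀¹ F(u) dx`. -/
def phi (f u : ℝ → ℝ) : ℝ :=
  gagSq u / (4 * π) - ∫ x in Ioo (0 : ℝ) 1, primF f (u x)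

/-- `⟨φ'(u), v⟩ = (1/(2π))⟨u,v⟩_X - ∫₀¹ f(u) v dx`. -/
def phiDeriv (f u v : ℝ → ℝ) : ℝ :=
  innerX u v / (2 * π) - ∫ x in Ioo (0 : ℝ) 1, f (u x) * v x

/-- The Palais–Smale condition at level `c`. -/
def PalaisSmaleAt (f : ℝ → ℝ) (c : ℝ) : Prop :=
  ∀ u : ℕ → ℝ → ℝ, (∀ n, memX (u n)) →
    Filter.Tendsto (fun n => phi f (u n)) Filter.atTop (𝓝 c) →
    (∃ ε : ℕ → ℝ, Filter.Tendsto ε Filter.atTop (𝓝 0) ∧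
      ∀ n, ∀ v : ℝ → ℝ, memX v → gagNorm v ≤ 1 → |phiDeriv f (u n) v| ≤ ε n) →
    ∃ w : ℝ → ℝ, memX w ∧ ∃ g : ℕ → ℕ, StrictMono g ∧
      Filter.Tendsto (fun k => gagNorm (fun x => u (g k) x - w x)) Filter.atTop (𝓝 0)

/-!
Write `ρ = ‖u‖_X` and `u = ρ v` with `‖v‖_X = 1`. Hypothesis (ii) makes `F(t)/t²` monotone on each
side of `0`, so (iii) yields `F(t) ≤ c t²` near `0` with `c < λ₁/(4π)`, while (i) and (iv) give
`F(t) ≤ C e^{α t²}` everywhere; together `F(t) ≤ c t² + C t⁴ e^{α t²}`. For `ρ ≤ 1` this gives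
`F(ρ v) ≤ c (ρ v)² + C' ρ⁴ e^{2α v²}`, and with `α = πω/2` the Trudinger–Moser bound for `v` and the
Poincaré inequality `λ₁ ‖u‖²_{L²} ≤ ‖u‖²_X` yield `φ(u) ≥ ρ² (1/(4π) - c/λ₁ - C'' ρ²)`.
-/

lemma gagKer_nonneg (u : ℝ → ℝ) (p : ℝ × ℝ) : 0 ≤ gagKer u p :=
  div_nonneg (sq_nonneg _) (sq_nonneg _)

lemma gagSq_nonneg (u : ℝ → ℝ) : 0 ≤ gagSq u :=
  integral_nonneg (gagKer_nonneg u)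

lemma gagKer_const_mul (c : ℝ) (u : ℝ → ℝ) :
    gagKer (fun x => c * u x) = fun p => c ^ 2 * gagKer u p := by
  funext p
  simp only [gagKer, ← mul_sub, mul_pow, mul_div_assoc]

lemma gagSq_const_mul (c : ℝ) (u : ℝ → ℝ) : gagSq (fun x => c * u x) = c ^ 2 * gagSq u := by
  rw [gagSq, gagKer_const_mul, integral_const_mul, gagSq]

lemma memX.const_mul {u : ℝ → ℝ} (hu : memX u) (c : ℝ) : memX (fun x => c * u x) := by
  obtain ⟨⟨hmeas, hsq, hker⟩, hzero⟩ := hu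
  refine ⟨⟨hmeas.const_mul c, ?_, ?_⟩, ?_⟩
  · simpa only [mul_pow] using hsq.const_mul (c ^ 2)
  · simpa only [gagKer_const_mul] using hker.const_mul (c ^ 2)
  · filter_upwards [hzero] with x hx hnx
    rw [hx hnx, mul_zero]

lemma lam1_le_gagSq {u : ℝ → ℝ} (hu : memX u) (h1 : ∫ x in Ioo (0 : ℝ) 1, u x ^ 2 = 1) :
    lam1 ≤ gagSq u :=
  csInf_le ⟨0, by rintro t ⟨v, -, -, rfl⟩; exact gagSq_nonneg v⟩ ⟨u, hu, h1, rfl⟩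

lemma lam1_mul_integral_sq_le_gagSq {u : ℝ → ℝ} (hu : memX u) :
    lam1 * ∫ x in Ioo (0 : ℝ) 1, u x ^ 2 ≤ gagSq u := by
  set s := ∫ x in Ioo (0 : ℝ) 1, u x ^ 2 with hs
  have hs0 : 0 ≤ s := setIntegral_nonneg measurableSet_Ioo fun x _ => sq_nonneg (u x)
  rcases hs0.eq_or_lt with hzero | hpos
  · rw [← hzero, mul_zero]
    exact gagSq_nonneg u
  have hnormalised : ∫ x in Ioo (0 : ℝ) 1, ((√s)⁻¹ * u x) ^ 2 = 1 := by
    simp only [mul_pow, inv_pow, Real.sq_sqrt hs0]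
    rw [integral_const_mul, ← hs, inv_mul_cancel₀ hpos.ne']
  have hle := lam1_le_gagSq (hu.const_mul (√s)⁻¹) hnormalised
  rw [gagSq_const_mul, inv_pow, Real.sq_sqrt hs0, inv_mul_eq_div, le_div_iff₀ hpos] at hle
  linarith

lemma TMprop.exists_integral_exp_le {ω α : ℝ} (hTM : TMprop ω) (hα : 0 < α)
    (hαω : α < 2 * π * ω) :
    ∃ K, 0 < K ∧ ∀ v : ℝ → ℝ, memX v → gagNorm v ≤ 1 →
      IntegrableOn (fun x => exp (α * v x ^ 2)) (Ioo (0 : ℝ) 1) ∧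
        ∫ x in Ioo (0 : ℝ) 1, exp (α * v x ^ 2) ≤ K := by
  obtain ⟨K, hK, hbound⟩ := hTM α hα hαω
  refine ⟨K, hK, fun v hv hnorm => ?_⟩
  have hmeas : AEStronglyMeasurable (fun x => exp (α * v x ^ 2)) (volume.restrict (Ioo 0 1)) :=
    (measurable_exp.comp ((hv.1.1.pow_const 2).const_mul α)).aestronglyMeasurable
  have hnonneg : 0 ≤ᵐ[volume.restrict (Ioo 0 1)] fun x => exp (α * v x ^ 2) :=
    ae_of_all _ fun x => (exp_pos _).le
  refine ⟨⟨hmeas, ?_⟩, ?_⟩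
  · rw [hasFiniteIntegral_iff_ofReal hnonneg]
    exact (hbound v hv hnorm).trans_lt ENNReal.ofReal_lt_top
  · rw [integral_eq_lintegral_of_nonneg_ae hnonneg hmeas]
    exact ENNReal.toReal_le_of_le_ofReal hK.le (hbound v hv hnorm)

lemma pow_four_le_mul_exp {α : ℝ} (hα : 0 < α) (s : ℝ) :
    s ^ 4 ≤ 2 / α ^ 2 * exp (α * s ^ 2) := by
  have h := Real.pow_div_factorial_le_exp (α * s ^ 2) (by positivity) 2
  rw [div_mul_eq_mul_div, le_div_iff₀ (by positivity)]
  norm_num [Nat.factorial] at h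
  nlinarith

lemma exists_pos_le_one_mul_sq_le {D ε : ℝ} (hD : 0 ≤ D) (hε : 0 < ε) :
    ∃ ρ, 0 < ρ ∧ ρ ≤ 1 ∧ D * ρ ^ 2 ≤ ε := by
  set ρ := min 1 (ε / (D + 1))
  have hρ0 : 0 < ρ := lt_min one_pos (by positivity)
  have hρ1 : ρ ≤ 1 := min_le_left _ _
  have hρε : ρ * (D + 1) ≤ ε := (le_div_iff₀ (by positivity)).1 (min_le_right _ _)
  refine ⟨ρ, hρ0, hρ1, ?_⟩
  nlinarith [mul_le_mul_of_nonneg_left hρ1 (mul_nonneg hD hρ0.le)]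

section Primitive

variable {f : ℝ → ℝ}

lemma primF_zero (f : ℝ → ℝ) : primF f 0 = 0 :=
  intervalIntegral.integral_same

lemma primF_nonneg (hii : ∀ t : ℝ, t ≠ 0 → 0 < 2 * primF f t ∧ 2 * primF f t ≤ f t * t)
    (t : ℝ) : 0 ≤ primF f t := by
  rcases eq_or_ne t 0 with rfl | ht
  · exact (primF_zero f).ge
  · linarith [(hii t ht).1]

lemma hasDerivAt_primF_div_sq (hf : Continuous f) {t : ℝ} (ht : t ≠ 0) :
    HasDerivAt (fun s => primF f s / s ^ 2) ((f t * t - 2 * primF f t) / t ^ 3) t := by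
  have hF : HasDerivAt (primF f) (f t) t := (hf.integral_hasStrictDerivAt 0 t).hasDerivAt
  refine (hF.fun_div (hasDerivAt_pow 2 t) (pow_ne_zero 2 ht)).congr_deriv ?_
  push_cast
  field_simp

/-- Hypothesis (ii) makes `F(t)/t²` increasing in `|t|`, so it is bounded near `0`; this keeps
the `limsup` in (iii) from being a junk value. -/
lemma isBoundedUnder_primF_div_sq (hf : Continuous f)
    (hii : ∀ t : ℝ, t ≠ 0 → 0 < 2 * primF f t ∧ 2 * primF f t ≤ f t * t) :
    IsBoundedUnder (· ≤ ·) (𝓝[≠] (0 : ℝ)) fun t => primF f t / t ^ 2 := by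
  have hderiv (t : ℝ) (ht : t ≠ 0) := hasDerivAt_primF_div_sq hf ht
  have hnum (t : ℝ) (ht : t ≠ 0) : 0 ≤ f t * t - 2 * primF f t := by linarith [(hii t ht).2]
  have hmono : MonotoneOn (fun t => primF f t / t ^ 2) (Ioi 0) := by
    refine monotoneOn_of_hasDerivWithinAt_nonneg (convex_Ioi 0)
      (fun t ht => (hderiv t (ne_of_gt ht)).continuousAt.continuousWithinAt)
      (fun t ht => (hderiv t ?_).hasDerivWithinAt) fun t ht => ?_ <;>
      rw [interior_Ioi] at ht
    · exact ne_of_gt ht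
    · exact div_nonneg (hnum t (ne_of_gt ht)) (pow_pos ht 3).le
  have hanti : AntitoneOn (fun t => primF f t / t ^ 2) (Iio 0) := by
    refine antitoneOn_of_hasDerivWithinAt_nonpos (convex_Iio 0)
      (fun t ht => (hderiv t (ne_of_lt ht)).continuousAt.continuousWithinAt)
      (fun t ht => (hderiv t ?_).hasDerivWithinAt) fun t ht => ?_ <;>
      rw [interior_Iio] at ht
    · exact ne_of_lt ht
    · exact div_nonpos_of_nonneg_of_nonpos (hnum t (ne_of_lt ht)) (Odd.pow_nonpos (by decide) ht.le)
  refine ⟨max (primF f 1 / 1 ^ 2) (primF f (-1) / (-1) ^ 2), ?_⟩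
  rw [eventually_map, eventually_nhdsWithin_iff]
  filter_upwards [Ioo_mem_nhds (neg_lt_zero.2 one_pos) one_pos] with t ht (hne : t ≠ 0)
  rcases hne.lt_or_gt with hneg | hpos
  · exact (hanti (show (-1 : ℝ) ∈ Iio 0 by norm_num) hneg ht.1.le).trans (le_max_right _ _)
  · exact (hmono hpos (show (1 : ℝ) ∈ Ioi 0 by norm_num) ht.2.le).trans (le_max_left _ _)

lemma exists_primF_le_mul_sq (hf : Continuous f)
    (hii : ∀ t : ℝ, t ≠ 0 → 0 < 2 * primF f t ∧ 2 * primF f t ≤ f t * t) {L : ℝ}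
    (hL : limsup (fun t => primF f t / t ^ 2) (𝓝[≠] (0 : ℝ)) < L) :
    ∃ c, 0 ≤ c ∧ c < L ∧ ∃ δ > 0, ∀ t : ℝ, |t| ≤ δ → primF f t ≤ c * t ^ 2 := by
  obtain ⟨c, hlim, hcL⟩ := exists_between hL
  have hev := eventually_lt_of_limsup_lt hlim (isBoundedUnder_primF_div_sq hf hii)
  have hc : 0 ≤ c := by
    obtain ⟨t, hlt, hne : t ≠ 0⟩ := (hev.and self_mem_nhdsWithin).exists
    exact (div_nonneg (primF_nonneg hii t) (sq_nonneg t)).trans hlt.le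
  rw [eventually_nhdsWithin_iff, Metric.eventually_nhds_iff] at hev
  obtain ⟨ε, hε, hlt⟩ := hev
  refine ⟨c, hc, hcL, ε / 2, half_pos hε, fun t ht => ?_⟩
  rcases eq_or_ne t 0 with rfl | hne
  · simp [primF_zero]
  · have hdist : dist t 0 < ε := by rw [Real.dist_0_eq_abs]; linarith
    exact ((div_lt_iff₀ (pow_pos (abs_pos.2 hne) 2 |>.trans_eq (sq_abs t))).1
      (hlt hdist hne)).le

lemma exists_primF_le_mul_exp (hf : Continuous f)
    (hi : ∃ t₀ > (0 : ℝ), ∃ M > (0 : ℝ),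
      ∀ t : ℝ, t₀ ≤ |t| → 0 < primF f t ∧ primF f t ≤ M * |f t|) {α : ℝ}
    (hiv : Tendsto (fun t => |f t| * exp (-α * t ^ 2)) (cocompact ℝ) (𝓝 0)) :
    ∃ C, 0 ≤ C ∧ ∀ t : ℝ, primF f t ≤ C * exp (α * t ^ 2) := by
  obtain ⟨t₀, -, M, hM, hi⟩ := hi
  set g : ℝ → ℝ := fun t => primF f t * exp (-α * t ^ 2)
  have hg : Continuous g :=
    (intervalIntegral.continuous_primitive (fun a b => hf.intervalIntegrable a b) 0).mul
      (by fun_prop)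
  have hfar : ∀ᶠ t in cocompact ℝ, g t ≤ M := by
    filter_upwards [hiv.eventually_lt_const one_pos,
      tendsto_norm_cocompact_atTop.eventually_ge_atTop t₀] with t hsmall (hlarge : t₀ ≤ |t|)
    calc g t ≤ M * |f t| * exp (-α * t ^ 2) :=
          mul_le_mul_of_nonneg_right (hi t hlarge).2 (exp_pos _).le
      _ ≤ M * 1 := by rw [mul_assoc]; exact mul_le_mul_of_nonneg_left hsmall.le hM.le
      _ = M := mul_one M
  obtain ⟨K, hK, hKc⟩ := mem_cocompact.1 hfar
  obtain ⟨B, hB⟩ := hK.bddAbove_image hg.continuousOn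
  refine ⟨max M B, hM.le.trans (le_max_left _ _), fun t => ?_⟩
  have hgt : g t ≤ max M B := by
    by_cases htK : t ∈ K
    · exact (hB ⟨t, htK, rfl⟩).trans (le_max_right _ _)
    · exact (hKc htK).trans (le_max_left _ _)
  calc primF f t = g t * exp (α * t ^ 2) := by
        rw [mul_assoc, ← exp_add, neg_mul, neg_add_cancel, exp_zero, mul_one]
    _ ≤ max M B * exp (α * t ^ 2) := mul_le_mul_of_nonneg_right hgt (exp_pos _).le

lemma exists_primF_le_sq_add_pow_four_mul_exp (hf : Continuous f)
    (hi : ∃ t₀ > (0 : ℝ), ∃ M > (0 : ℝ),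
      ∀ t : ℝ, t₀ ≤ |t| → 0 < primF f t ∧ primF f t ≤ M * |f t|)
    (hii : ∀ t : ℝ, t ≠ 0 → 0 < 2 * primF f t ∧ 2 * primF f t ≤ f t * t) {L : ℝ}
    (hL : limsup (fun t => primF f t / t ^ 2) (𝓝[≠] (0 : ℝ)) < L) {α : ℝ}
    (hiv : Tendsto (fun t => |f t| * exp (-α * t ^ 2)) (cocompact ℝ) (𝓝 0)) :
    ∃ c, 0 ≤ c ∧ c < L ∧ ∃ C, 0 ≤ C ∧
      ∀ t : ℝ, primF f t ≤ c * t ^ 2 + C * (t ^ 4 * exp (α * t ^ 2)) := by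
  obtain ⟨c, hc, hcL, δ, hδ, hsmall⟩ := exists_primF_le_mul_sq hf hii hL
  obtain ⟨C, hC, hlarge⟩ := exists_primF_le_mul_exp hf hi hiv
  refine ⟨c, hc, hcL, C / δ ^ 4, by positivity, fun t => ?_⟩
  have hsq : 0 ≤ c * t ^ 2 := by positivity
  have hexp : 0 ≤ C / δ ^ 4 * (t ^ 4 * exp (α * t ^ 2)) := by positivity
  rcases le_total |t| δ with ht | ht
  · linarith [hsmall t ht]
  · have hδt : δ ^ 4 ≤ t ^ 4 := by
      simpa only [Even.pow_abs (by decide : Even 4)] using pow_le_pow_left₀ hδ.le ht 4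
    have : C * exp (α * t ^ 2) ≤ C / δ ^ 4 * (t ^ 4 * exp (α * t ^ 2)) := by
      rw [div_mul_eq_mul_div, le_div_iff₀ (by positivity)]
      nlinarith [mul_le_mul_of_nonneg_left hδt (by positivity : 0 ≤ C * exp (α * t ^ 2))]
    linarith [hlarge t]

lemma primF_mul_le {c C α ρ : ℝ}
    (hF : ∀ t : ℝ, primF f t ≤ c * t ^ 2 + C * (t ^ 4 * exp (α * t ^ 2)))
    (hC : 0 ≤ C) (hα : 0 < α) (hρ0 : 0 ≤ ρ) (hρ1 : ρ ≤ 1) (s : ℝ) :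
    primF f (ρ * s) ≤ c * (ρ * s) ^ 2 + 2 * C / α ^ 2 * ρ ^ 4 * exp (2 * α * s ^ 2) := by
  have hexp : exp (α * (ρ * s) ^ 2) ≤ exp (α * s ^ 2) := by
    refine exp_le_exp.2 (mul_le_mul_of_nonneg_left ?_ hα.le)
    rw [mul_pow]
    exact mul_le_of_le_one_left (sq_nonneg s) (pow_le_one₀ hρ0 hρ1)
  have hsplit : exp (2 * α * s ^ 2) = exp (α * s ^ 2) * exp (α * s ^ 2) := by
    rw [← exp_add]; ring_nf
  calc primF f (ρ * s) ≤ c * (ρ * s) ^ 2 + C * (ρ ^ 4 * (s ^ 4 * exp (α * (ρ * s) ^ 2))) :=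
        (hF (ρ * s)).trans_eq (by ring)
    _ ≤ c * (ρ * s) ^ 2 + C * (ρ ^ 4 * (2 / α ^ 2 * exp (α * s ^ 2) * exp (α * s ^ 2))) := by
        gcongr
        exact pow_four_le_mul_exp hα s
    _ = _ := by rw [hsplit]; ring

lemma setIntegral_primF_le {u g : ℝ → ℝ} {c : ℝ}
    (hii : ∀ t : ℝ, t ≠ 0 → 0 < 2 * primF f t ∧ 2 * primF f t ≤ f t * t) (hu : memX u)
    (hg : IntegrableOn g (Ioo (0 : ℝ) 1)) (hFu : ∀ x, primF f (u x) ≤ c * u x ^ 2 + g x) :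
    ∫ x in Ioo (0 : ℝ) 1, primF f (u x) ≤
      c * (∫ x in Ioo (0 : ℝ) 1, u x ^ 2) + ∫ x in Ioo (0 : ℝ) 1, g x := by
  have hsq : IntegrableOn (fun x => c * u x ^ 2) (Ioo (0 : ℝ) 1) :=
    hu.1.2.1.integrableOn.const_mul c
  rw [← integral_const_mul, ← integral_add hsq hg]
  exact integral_mono_of_nonneg (ae_of_all _ fun x => primF_nonneg hii _) (hsq.add hg)
    (ae_of_all _ hFu)

lemma le_phi_of_gagNorm_eq {c D α K ρ : ℝ} {u : ℝ → ℝ}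
    (hii : ∀ t : ℝ, t ≠ 0 → 0 < 2 * primF f t ∧ 2 * primF f t ≤ f t * t)
    (hlam : 0 < lam1) (hc : 0 ≤ c) (hD : 0 ≤ D) (hρ : 0 < ρ)
    (hF : ∀ s, primF f (ρ * s) ≤ c * (ρ * s) ^ 2 + D * ρ ^ 4 * exp (α * s ^ 2))
    (hK : ∀ v : ℝ → ℝ, memX v → gagNorm v ≤ 1 →
      IntegrableOn (fun x => exp (α * v x ^ 2)) (Ioo (0 : ℝ) 1) ∧
        ∫ x in Ioo (0 : ℝ) 1, exp (α * v x ^ 2) ≤ K)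
    (hu : memX u) (hnorm : gagNorm u = ρ) :
    ρ ^ 2 * (1 / (4 * π) - c / lam1 - D * K * ρ ^ 2) ≤ phi f u := by
  have hgag : gagSq u = ρ ^ 2 := by rw [← hnorm, gagNorm, sq_sqrt (gagSq_nonneg u)]
  set v := fun x => ρ⁻¹ * u x
  have hvnorm : gagNorm v ≤ 1 := by
    rw [gagNorm, gagSq_const_mul, hgag, inv_pow, inv_mul_cancel₀ (by positivity), sqrt_one]
  have hux (x : ℝ) : u x = ρ * v x := (mul_inv_cancel_left₀ hρ.ne' (u x)).symm
  obtain ⟨hE, hEK⟩ := hK v (hu.const_mul _) hvnorm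
  have hint := setIntegral_primF_le hii hu (hE.const_mul (D * ρ ^ 4))
    fun x => by rw [hux x]; exact hF (v x)
  rw [integral_const_mul] at hint
  have hpoinc : lam1 * ∫ x in Ioo (0 : ℝ) 1, u x ^ 2 ≤ ρ ^ 2 :=
    hgag ▸ lam1_mul_integral_sq_le_gagSq hu
  have hsq : c * ∫ x in Ioo (0 : ℝ) 1, u x ^ 2 ≤ c * (ρ ^ 2 / lam1) :=
    mul_le_mul_of_nonneg_left ((le_div_iff₀' hlam).2 hpoinc) hc
  have hexp : D * ρ ^ 4 * ∫ x in Ioo (0 : ℝ) 1, exp (α * v x ^ 2) ≤ D * ρ ^ 4 * K :=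
    mul_le_mul_of_nonneg_left hEK (by positivity)
  have hexpand : ρ ^ 2 * (1 / (4 * π) - c / lam1 - D * K * ρ ^ 2) =
      ρ ^ 2 / (4 * π) - c * (ρ ^ 2 / lam1) - D * ρ ^ 4 * K := by ring
  rw [phi, hgag, hexpand]
  linarith

end Primitive

theorem statement12_general (ω : ℝ) (hω0 : 0 < ω) (hTM : TMprop ω)
    (f : ℝ → ℝ) (hf : HypH f) :
    ∃ ρ : ℝ, 0 < ρ ∧ ∃ a : ℝ, 0 < a ∧
      ∀ u : ℝ → ℝ, memX u → gagNorm u = ρ → a ≤ phi f u := by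
  obtain ⟨hfc, -, hi, hii, hiii, hiv⟩ := hf
  set α := π * ω / 2 with hα_def
  have hα : 0 < α := by positivity
  obtain ⟨c, hc, hcL, C, hC, hF⟩ :=
    exists_primF_le_sq_add_pow_four_mul_exp hfc hi hii hiii (hiv α hα)
  obtain ⟨K, hK, hTMK⟩ :=
    hTM.exists_integral_exp_le (α := 2 * α) (by positivity) (by linarith)
  have hlam : 0 < lam1 := (div_pos_iff_of_pos_right (by positivity)).1 (hc.trans_lt hcL)
  set ε := 1 / (4 * π) - c / lam1
  have hε : 0 < ε := by
    rw [sub_pos, div_lt_div_iff₀ hlam (by positivity)]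
    rw [lt_div_iff₀ (by positivity)] at hcL
    linarith
  set D := 2 * C / α ^ 2 * K
  obtain ⟨ρ, hρ0, hρ1, hρD⟩ := exists_pos_le_one_mul_sq_le (by positivity : 0 ≤ D) (half_pos hε)
  refine ⟨ρ, hρ0, ρ ^ 2 * (ε / 2), by positivity, fun u hu hnorm => ?_⟩
  calc ρ ^ 2 * (ε / 2) ≤ ρ ^ 2 * (ε - D * ρ ^ 2) := by gcongr; linarith
    _ ≤ phi f u := le_phi_of_gagNorm_eq hii hlam hc (by positivity) hρ0
        (primF_mul_le hF hC hα hρ0.le hρ1) hTMK hu hnorm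

/-- mountain-pass geometry near zero (Lemma 3.2). -/
theorem statement12 (ω : ℝ) (hω0 : 0 < ω) (hωπ : ω ≤ π) (hTM : TMprop ω)
    (f : ℝ → ℝ) (hf : HypH f) :
    ∃ ρ : ℝ, 0 < ρ ∧ ∃ a : ℝ, 0 < a ∧
      ∀ u : ℝ → ℝ, memX u → gagNorm u = ρ → a ≤ phi f u :=
  statement12_general ω hω0 hTM f hf
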